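/- Let (F₁,G₁,ζ₁) and (F₂,G₂,ζ₂) be left loose morphisms of adjunctions from (L,R) to (L',R'), and let φ : F₁ ⇒ F₂ and ψ : G₁ ⇒ G₂ be natural transformations. Then (φL) ∘ ζ₁ = ζ₂ ∘ (L'ψ) holds if and only if (R'φ) ∘ ζ₁♯ = ζ₂♯ ∘ (ψR) holds. -/

import Mathlib

/-!
Both squares are equalities of 2-cells: the first says `ζ₁` whiskered by `φ` at the bottom equals
`ζ₂` whiskered by `ψ` at the top, the second is the same statement for the mates. The mates
correspondence is a bijection and commutes with whiskering along the vertical functors, so the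
two equalities are equivalent.
-/

open CategoryTheory

variable {C D C' D' : Type*} [Category C] [Category D] [Category C'] [Category D']

/-- The component at `X : C` of the mate `ζ♯ = (R'Fε)(R'ζR)(η'GR) : GR ⇒ R'F` of a natural
isomorphism `ζ : L'G ≅ FL` for a left loose morphism of adjunctions `(F, G, ζ)`. -/
def mateApp {L : D ⥤ C} {R : C ⥤ D} (adj : L ⊣ R)
    {L' : D' ⥤ C'} {R' : C' ⥤ D'} (adj' : L' ⊣ R')
    {F : C ⥤ C'} {G : D ⥤ D'} (ζ : G ⋙ L' ≅ L ⋙ F) (X : C) :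
    G.obj (R.obj X) ⟶ R'.obj (F.obj X) :=
  adj'.unit.app (G.obj (R.obj X)) ≫ R'.map (ζ.hom.app (R.obj X)) ≫
    R'.map (F.map (adj.counit.app X))

section

variable {L : D ⥤ C} {R : C ⥤ D} (adj : L ⊣ R) {L' : D' ⥤ C'} {R' : C' ⥤ D'} (adj' : L' ⊣ R')

lemma mateEquiv_whiskerBottom {G : D ⥤ D'} {F₁ F₂ : C ⥤ C'} (α : TwoSquare G L L' F₁)
    (φ : F₁ ⟶ F₂) :
    mateEquiv adj adj' (α.whiskerBottom φ) = (mateEquiv adj adj' α).whiskerLeft φ := by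
  ext Y
  simp only [mateEquiv_apply, TwoSquare.whiskerBottom_app, TwoSquare.whiskerLeft_app,
    NatTrans.comp_app, Functor.whiskerLeft_app, Functor.whiskerRight_app, Functor.comp_obj,
    Functor.comp_map, Functor.id_obj, Functor.rightUnitor_inv_app, Functor.leftUnitor_hom_app,
    Functor.associator_hom_app, Functor.associator_inv_app, Functor.map_comp, Category.comp_id,
    Category.id_comp, Category.assoc]
  rw [← R'.map_comp (φ.app _), ← φ.naturality, R'.map_comp]

lemma mateEquiv_whiskerTop {G₁ G₂ : D ⥤ D'} {F : C ⥤ C'} (α : TwoSquare G₂ L L' F)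
    (ψ : G₁ ⟶ G₂) :
    mateEquiv adj adj' (α.whiskerTop ψ) = (mateEquiv adj adj' α).whiskerRight ψ := by
  ext Y
  simp [adj'.unit_naturality_assoc]

lemma mateApp_eq_mateEquiv_app {F : C ⥤ C'} {G : D ⥤ D'} (ζ : G ⋙ L' ≅ L ⋙ F) (X : C) :
    mateApp adj adj' ζ X = (mateEquiv adj adj' ζ.hom).app X := by
  simp [mateApp, mateEquiv]

end

/-- for left loose morphisms of adjunctions `(F₁, G₁, ζ₁)` and `(F₂, G₂, ζ₂)` and
natural transformations `φ : F₁ ⇒ F₂`, `ψ : G₁ ⇒ G₂`, the square `(φL) ∘ ζ₁ = ζ₂ ∘ (L'ψ)`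
commutes if and only if the mate square `(R'φ) ∘ ζ₁♯ = ζ₂♯ ∘ (ψR)` commutes. -/
theorem two_cell_square_iff_mate_square
    {L : D ⥤ C} {R : C ⥤ D} (adj : L ⊣ R)
    {L' : D' ⥤ C'} {R' : C' ⥤ D'} (adj' : L' ⊣ R')
    {F₁ F₂ : C ⥤ C'} {G₁ G₂ : D ⥤ D'}
    (ζ₁ : G₁ ⋙ L' ≅ L ⋙ F₁) (ζ₂ : G₂ ⋙ L' ≅ L ⋙ F₂)
    (φ : F₁ ⟶ F₂) (ψ : G₁ ⟶ G₂) :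
    (∀ X : D, ζ₁.hom.app X ≫ φ.app (L.obj X) = L'.map (ψ.app X) ≫ ζ₂.hom.app X) ↔
    (∀ Y : C, mateApp adj adj' ζ₁ Y ≫ R'.map (φ.app Y) =
        ψ.app (R.obj Y) ≫ mateApp adj adj' ζ₂ Y) := by
  -- `TwoSquare.mk` keeps the terms well typed at reducible transparency, as the final `rw` needs.
  have square_iff : (∀ X : D, ζ₁.hom.app X ≫ φ.app (L.obj X) = L'.map (ψ.app X) ≫ ζ₂.hom.app X) ↔
      (TwoSquare.mk _ _ _ _ ζ₁.hom).whiskerBottom φ =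
        (TwoSquare.mk _ _ _ _ ζ₂.hom).whiskerTop ψ := by
    rw [TwoSquare.ext_iff]
    rfl
  have mate_iff : (∀ Y : C, mateApp adj adj' ζ₁ Y ≫ R'.map (φ.app Y) =
        ψ.app (R.obj Y) ≫ mateApp adj adj' ζ₂ Y) ↔
      (mateEquiv adj adj' ζ₁.hom).whiskerLeft φ = (mateEquiv adj adj' ζ₂.hom).whiskerRight ψ := by
    simp only [TwoSquare.ext_iff, mateApp_eq_mateEquiv_app]
    rfl
  rw [square_iff, mate_iff, ← (mateEquiv adj adj').apply_eq_iff_eq, mateEquiv_whiskerBottom,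
    mateEquiv_whiskerTop]
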